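/- arXiv:1604.05873 — 5 statements merged into one kernel-verified Lean document; each statement's English description precedes it below -/
import Mathlib

section
/- Let A be a unital associative algebra containing elements q and p with [q,p] = iℏ·1, ℏ ≠ 0. Then every submultiplicative seminorm on A is identically zero. -/
/-!
Wielandt's argument. From `[q, p] = c · 1` one gets `[q, p ^ (n + 1)] = (n + 1) c · p ^ n`, so for a
submultiplicative seminorm `(n + 1) ‖c‖ N(p ^ n) ≤ 2 N(q) N(p ^ (n + 1)) ≤ 2 N(q) N(p) N(p ^ n)`.
For `n` large this forces `N(p ^ n) = 0`; the first inequality then propagates the vanishing down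
to `N(1) = N(p ^ 0)`, and `N(a) ≤ N(a) N(1)` finishes.
-/

theorem commutator_pow_succ_of_commutator_eq_smul_one {R A : Type*} [CommSemiring R] [Ring A]
    [Algebra R A] {q p : A} {c : R} (hcc : q * p - p * q = c • (1 : A)) (n : ℕ) :
    q * p ^ (n + 1) - p ^ (n + 1) * q = ((n + 1 : R) * c) • p ^ n := by
  induction n with
  | zero => simpa using hcc
  | succ n ih =>
    have leibniz : q * p ^ (n + 2) - p ^ (n + 2) * q
        = (q * p ^ (n + 1) - p ^ (n + 1) * q) * p + p ^ (n + 1) * (q * p - p * q) := by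
      rw [pow_succ]; noncomm_ring
    rw [leibniz, ih, hcc, smul_mul_assoc, mul_smul_comm, mul_one, ← pow_succ, ← add_smul]
    push_cast
    ring_nf

namespace Seminorm

section SeminormedRing

variable {𝕜 A : Type*} [SeminormedRing 𝕜] [Ring A] [Module 𝕜 A] {N : Seminorm 𝕜 A}

theorem map_eq_zero_of_map_one_eq_zero (hmul : ∀ a b : A, N (a * b) ≤ N a * N b)
    (h1 : N 1 = 0) (a : A) : N a = 0 := by
  have : N a ≤ 0 := by simpa [h1] using hmul a 1
  exact le_antisymm this (apply_nonneg N a)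

theorem map_commutator_le (hmul : ∀ a b : A, N (a * b) ≤ N a * N b) (q a : A) :
    N (q * a - a * q) ≤ 2 * N q * N a :=
  calc N (q * a - a * q) ≤ N (q * a) + N (a * q) := map_sub_le_add N _ _
    _ ≤ N q * N a + N a * N q := add_le_add (hmul _ _) (hmul _ _)
    _ = 2 * N q * N a := by ring

end SeminormedRing

variable {𝕜 A : Type*} [RCLike 𝕜] [Ring A] [Algebra 𝕜 A] {N : Seminorm 𝕜 A} {q p : A} {c : 𝕜}

theorem map_pow_le_of_commutator_eq_smul_one (hmul : ∀ a b : A, N (a * b) ≤ N a * N b)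
    (hcc : q * p - p * q = c • (1 : A)) (n : ℕ) :
    (n + 1) * ‖c‖ * N (p ^ n) ≤ 2 * N q * N (p ^ (n + 1)) := by
  have hnorm : ‖(n + 1 : 𝕜)‖ = n + 1 := by exact_mod_cast RCLike.norm_natCast (K := 𝕜) (n + 1)
  calc (n + 1) * ‖c‖ * N (p ^ n) = N (q * p ^ (n + 1) - p ^ (n + 1) * q) := by
        rw [commutator_pow_succ_of_commutator_eq_smul_one hcc, map_smul_eq_mul, norm_mul, hnorm]
    _ ≤ 2 * N q * N (p ^ (n + 1)) := map_commutator_le hmul q _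

theorem exists_map_pow_eq_zero_of_commutator_eq_smul_one
    (hmul : ∀ a b : A, N (a * b) ≤ N a * N b) (hcc : q * p - p * q = c • (1 : A)) (hc : c ≠ 0) :
    ∃ n : ℕ, N (p ^ n) = 0 := by
  by_contra! hpos
  obtain ⟨n, hn⟩ := exists_nat_gt (2 * N q * N p / ‖c‖)
  have hpn : 0 < N (p ^ n) := (apply_nonneg N _).lt_of_ne' (hpos n)
  have hlarge : 2 * N q * N p < (n + 1) * ‖c‖ := by
    rw [div_lt_iff₀ (norm_pos_iff.mpr hc)] at hn
    nlinarith [norm_nonneg c]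
  have hsmall : (n + 1) * ‖c‖ * N (p ^ n) ≤ 2 * N q * N p * N (p ^ n) :=
    calc (n + 1) * ‖c‖ * N (p ^ n) ≤ 2 * N q * N (p ^ (n + 1)) :=
          map_pow_le_of_commutator_eq_smul_one hmul hcc n
      _ ≤ 2 * N q * (N p * N (p ^ n)) := by
          rw [pow_succ']
          exact mul_le_mul_of_nonneg_left (hmul _ _) (by positivity)
      _ = 2 * N q * N p * N (p ^ n) := by ring
  exact absurd (le_of_mul_le_mul_right hsmall hpn) (not_le.mpr hlarge)

theorem map_one_eq_zero_of_map_pow_eq_zero (hmul : ∀ a b : A, N (a * b) ≤ N a * N b)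
    (hcc : q * p - p * q = c • (1 : A)) (hc : c ≠ 0) {n : ℕ} (hn : N (p ^ n) = 0) :
    N 1 = 0 := by
  induction n with
  | zero => simpa using hn
  | succ n ih =>
    apply ih
    have h := map_pow_le_of_commutator_eq_smul_one hmul hcc n
    rw [hn, mul_zero] at h
    have hcoeff : 0 < ((n : ℝ) + 1) * ‖c‖ := by positivity
    exact le_antisymm (nonpos_of_mul_nonpos_right h hcoeff) (apply_nonneg N _)

theorem eq_zero_of_commutator_eq_smul_one (hmul : ∀ a b : A, N (a * b) ≤ N a * N b)
    (hcc : q * p - p * q = c • (1 : A)) (hc : c ≠ 0) (a : A) : N a = 0 := by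
  obtain ⟨n, hn⟩ := exists_map_pow_eq_zero_of_commutator_eq_smul_one hmul hcc hc
  exact map_eq_zero_of_map_one_eq_zero hmul (map_one_eq_zero_of_map_pow_eq_zero hmul hcc hc hn) a

end Seminorm

/-- If a unital associative ℂ-algebra contains `q`, `p` with `[q,p] = iℏ·1`, `ℏ ≠ 0`,
then every submultiplicative seminorm on it is identically zero. -/
theorem stmt1 {A : Type*} [Ring A] [Algebra ℂ A] (q p : A) (ℏ : ℝ) (hℏ : ℏ ≠ 0)
    (hcc : q * p - p * q = (Complex.I * (ℏ : ℂ)) • (1 : A))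
    (N : Seminorm ℂ A) (hmul : ∀ a b : A, N (a * b) ≤ N a * N b) :
    ∀ a : A, N a = 0 :=
  Seminorm.eq_zero_of_commutator_eq_smul_one hmul hcc
    (mul_ne_zero Complex.I_ne_zero (Complex.ofReal_ne_zero.mpr hℏ))
end

section
/- If a seminorm q on a locally convex algebra A satisfies p(x₁⋯xₙ) ≤ q(x₁)⋯q(xₙ) for all n ≥ m (for some fixed m) and all xᵢ ∈ A, and the multiplication is continuous, then there exists a continuous seminorm q' with p(x₁⋯xₙ) ≤ q'(x₁)⋯q'(xₙ) for all n ≥ 1. Concretely, one can take q' = max{p, q^(2), …, q^(m−1), q} where each q^(i) controls i-fold products. -/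
/-!
A finite family of upward-closed conditions, each satisfied by some element of a sup-closed set,
is satisfied simultaneously by the supremum of the witnesses. Bounding `n`-fold products is such a
condition on the seminorm `r`: `p` handles `n = 1`, the `q⁽ⁿ⁾` handle `2 ≤ n < m`, and `q`
handles every `n ≥ m` at once, so only finitely many conditions remain.
-/

theorem SupClosed.exists_mem_ge_forall {α ι : Type*} [SemilatticeSup α] {P : Set α}
    (hP : SupClosed P) {C : ι → α → Prop} (hC : ∀ i, Monotone (C i)) {b : α} (hb : b ∈ P)
    (s : Finset ι) (hs : ∀ i ∈ s, ∃ r ∈ P, C i r) : ∃ r ∈ P, b ≤ r ∧ ∀ i ∈ s, C i r := by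
  classical
  induction s using Finset.induction_on with
  | empty => exact ⟨b, hb, le_rfl, by simp⟩
  | insert i s _ ih =>
    obtain ⟨r, hrP, hbr, hr⟩ := ih fun j hj => hs j (Finset.mem_insert_of_mem hj)
    obtain ⟨r', hr'P, hr'⟩ := hs i (Finset.mem_insert_self i s)
    refine ⟨r ⊔ r', hP hrP hr'P, hbr.trans le_sup_left, ?_⟩
    rw [Finset.forall_mem_insert]
    exact ⟨hC i le_sup_right hr', fun j hj => hC j le_sup_left (hr j hj)⟩

def BoundsProducts {A : Type*} [Monoid A] (p r : A → ℝ) (n : ℕ) : Prop :=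
  ∀ l : List A, l.length = n → p l.prod ≤ (l.map r).prod

section Seminorm

variable {𝕜 A : Type*} [SeminormedRing 𝕜] [Ring A] [SMul 𝕜 A]

theorem Seminorm.list_prod_map_le_prod_map {f g : Seminorm 𝕜 A} (h : f ≤ g) (l : List A) :
    (l.map f).prod ≤ (l.map g).prod :=
  List.prod_map_le_prod_map₀ _ _ (fun x _ => apply_nonneg f x) (fun x _ => h x)

theorem monotone_boundsProducts (p : A → ℝ) (n : ℕ) :
    Monotone fun r : Seminorm 𝕜 A => BoundsProducts p r n :=
  fun _ _ h hr l hl => (hr l hl).trans (Seminorm.list_prod_map_le_prod_map h l)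

theorem boundsProducts_one (p : Seminorm 𝕜 A) : BoundsProducts p p 1 := by
  intro l hl
  obtain ⟨x, rfl⟩ := List.length_eq_one_iff.mp hl
  simp

end Seminorm

/-- If a continuous seminorm `q` satisfies `p(x₁⋯xₙ) ≤ q(x₁)⋯q(xₙ)` for all `n ≥ m`, and
multiplication is continuous (so each `i`-fold product with `2 ≤ i < m` is controlled by
some continuous seminorm `qᵢ`), then there is a continuous seminorm `q'` with
`p(x₁⋯xₙ) ≤ q'(x₁)⋯q'(xₙ)` for all `n ≥ 1`.  The set `P` models the continuous seminorms;
it is closed under binary maxima. -/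
theorem stmt3 {A : Type*} [Ring A] [Algebra ℂ A] (P : Set (Seminorm ℂ A))
    (hmax : ∀ f ∈ P, ∀ g ∈ P, f ⊔ g ∈ P)
    (p q : Seminorm ℂ A) (hp : p ∈ P) (hq : q ∈ P) (m : ℕ)
    (hqm : ∀ l : List A, m ≤ l.length → p l.prod ≤ (l.map q).prod)
    (hcont : ∀ i : ℕ, 2 ≤ i → i < m →
      ∃ qi ∈ P, ∀ l : List A, l.length = i → p l.prod ≤ (l.map qi).prod) :
    ∃ q' ∈ P, ∀ l : List A, 1 ≤ l.length → p l.prod ≤ (l.map q').prod := by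
  have hsmall : ∀ n ∈ Finset.Ico 1 m, ∃ r ∈ P, BoundsProducts p r n := by
    intro n hn
    obtain ⟨h1, hm⟩ := Finset.mem_Ico.1 hn
    obtain rfl | h2 := h1.eq_or_lt
    · exact ⟨p, hp, boundsProducts_one p⟩
    · exact hcont n h2 hm
  obtain ⟨r, hrP, hqr, hr⟩ := SupClosed.exists_mem_ge_forall (fun f hf g hg => hmax f hf g hg)
    (monotone_boundsProducts p) hq _ hsmall
  refine ⟨r, hrP, fun l hl => ?_⟩
  by_cases hlm : l.length < m
  · exact hr l.length (Finset.mem_Ico.2 ⟨hl, hlm⟩) l rfl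
  · exact (hqm l (not_lt.1 hlm)).trans (Seminorm.list_prod_map_le_prod_map hqr l)
end

section
/- In ℝ² with the maximum norm ‖·‖_∞, the projective tensor norm of the symmetrized tensor Sym(e₁⊗e₂) = (1/2)(e₁⊗e₂ + e₂⊗e₁) is at most 1/2, strictly less than the projective tensor norm of e₁⊗e₂, which equals 1. -/
/-!
The polarization identity `½(u⊗v + v⊗u) = ¼(u+v)⊗(u+v) + ¼(v-u)⊗(u-v)` writes the symmetrized
tensor as two elementary tensors of norm `¼` each in the max norm. For the lower bound
`‖a⊗b‖_π ≥ ‖a‖‖b‖`, the bilinear form `(a', b') ↦ a' i * b' j`, with `i`, `j` coordinates where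
`a`, `b` attain their max norm, has norm at most `1` and so bounds every representation from below.
-/

open scoped TensorProduct

/-- The projective tensor norm on `(Fin 2 → ℝ) ⊗ (Fin 2 → ℝ)`, where `Fin 2 → ℝ`
carries the maximum norm. -/
noncomputable def projNorm (x : (Fin 2 → ℝ) ⊗[ℝ] (Fin 2 → ℝ)) : ℝ :=
  sInf { r : ℝ | ∃ (m : ℕ) (a b : Fin m → Fin 2 → ℝ),
    x = ∑ j : Fin m, (a j) ⊗ₜ[ℝ] (b j) ∧
    r = ∑ j : Fin m, ‖a j‖ * ‖b j‖ }

theorem half_smul_tmul_add_tmul_swap {M : Type*} [AddCommGroup M] [Module ℝ M] (u v : M) :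
    (1 / 2 : ℝ) • (u ⊗ₜ[ℝ] v + v ⊗ₜ[ℝ] u) =
      ((1 / 4 : ℝ) • (u + v)) ⊗ₜ[ℝ] (u + v) + ((1 / 4 : ℝ) • (v - u)) ⊗ₜ[ℝ] (u - v) := by
  simp only [← TensorProduct.smul_tmul', TensorProduct.tmul_add, TensorProduct.add_tmul,
    TensorProduct.tmul_sub, TensorProduct.sub_tmul, smul_add, smul_sub]
  module

theorem norm_vecCons_two (a b : ℝ) : ‖(![a, b] : Fin 2 → ℝ)‖ = max |a| |b| := by
  simp [Pi.norm_def, Fin.univ_succ, Real.norm_eq_abs]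

theorem projNorm_le_sum {x : (Fin 2 → ℝ) ⊗[ℝ] (Fin 2 → ℝ)} {m : ℕ} (a b : Fin m → Fin 2 → ℝ)
    (hx : x = ∑ j, a j ⊗ₜ[ℝ] b j) : projNorm x ≤ ∑ j, ‖a j‖ * ‖b j‖ :=
  csInf_le ⟨0, by rintro r ⟨m, a, b, -, rfl⟩; positivity⟩ ⟨m, a, b, hx, rfl⟩

theorem projNorm_add_tmul_le (a b c d : Fin 2 → ℝ) :
    projNorm (a ⊗ₜ[ℝ] b + c ⊗ₜ[ℝ] d) ≤ ‖a‖ * ‖b‖ + ‖c‖ * ‖d‖ := by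
  simpa using projNorm_le_sum ![a, c] ![b, d] (by simp)

theorem abs_lift_le_projNorm (B : (Fin 2 → ℝ) →ₗ[ℝ] (Fin 2 → ℝ) →ₗ[ℝ] ℝ)
    (hB : ∀ a b, |B a b| ≤ ‖a‖ * ‖b‖) (x : (Fin 2 → ℝ) ⊗[ℝ] (Fin 2 → ℝ)) :
    |TensorProduct.lift B x| ≤ projNorm x := by
  obtain ⟨m, a, b, hx⟩ := TensorProduct.exists_sum_tmul_eq x
  refine le_csInf ⟨_, m, a, b, hx, rfl⟩ ?_
  rintro r ⟨m, a, b, rfl, rfl⟩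
  simp only [map_sum, TensorProduct.lift.tmul]
  exact (Finset.abs_sum_le_sum_abs _ _).trans (Finset.sum_le_sum fun j _ ↦ hB _ _)

theorem projNorm_tmul (a b : Fin 2 → ℝ) : projNorm (a ⊗ₜ[ℝ] b) = ‖a‖ * ‖b‖ := by
  refine le_antisymm (by simpa using projNorm_le_sum (m := 1) (fun _ ↦ a) (fun _ ↦ b) (by simp)) ?_
  obtain ⟨i, hi⟩ := (IsGreatest.pi_norm a).1
  obtain ⟨j, hj⟩ := (IsGreatest.pi_norm b).1
  have hB : ∀ a' b' : Fin 2 → ℝ, |a' i * b' j| ≤ ‖a'‖ * ‖b'‖ := fun a' b' ↦ by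
    rw [abs_mul, ← Real.norm_eq_abs, ← Real.norm_eq_abs]
    exact mul_le_mul (norm_le_pi_norm a' i) (norm_le_pi_norm b' j) (norm_nonneg _) (norm_nonneg _)
  simpa [abs_mul, ← Real.norm_eq_abs, hi, hj] using abs_lift_le_projNorm
    ((LinearMap.mul ℝ ℝ).compl₁₂ (LinearMap.proj i) (LinearMap.proj j)) hB (a ⊗ₜ b)

/-- In `ℝ²` with the maximum norm, the projective norm of `Sym(e₁⊗e₂)` is at most `1/2`,
strictly smaller than the projective norm of `e₁⊗e₂`, which equals `1`. -/
theorem stmt5 :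
    let e₁ : Fin 2 → ℝ := ![1, 0]
    let e₂ : Fin 2 → ℝ := ![0, 1]
    projNorm (((1 : ℝ)/2) • (e₁ ⊗ₜ[ℝ] e₂ + e₂ ⊗ₜ[ℝ] e₁)) ≤ 1/2 ∧
    projNorm (e₁ ⊗ₜ[ℝ] e₂) = 1 ∧
    projNorm (((1 : ℝ)/2) • (e₁ ⊗ₜ[ℝ] e₂ + e₂ ⊗ₜ[ℝ] e₁)) < projNorm (e₁ ⊗ₜ[ℝ] e₂) := by
  intro e₁ e₂
  have hsym : projNorm ((1 / 2 : ℝ) • (e₁ ⊗ₜ[ℝ] e₂ + e₂ ⊗ₜ[ℝ] e₁)) ≤ 1 / 2 := by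
    rw [half_smul_tmul_add_tmul_swap]
    refine (projNorm_add_tmul_le _ _ _ _).trans_eq ?_
    simp [e₁, e₂, norm_vecCons_two]
    norm_num
  have htmul : projNorm (e₁ ⊗ₜ[ℝ] e₂) = 1 := by
    simp [projNorm_tmul, e₁, e₂, norm_vecCons_two]
  exact ⟨hsym, htmul, by rw [htmul]; linarith⟩
end

section
/- Let 𝔤 be an AE Lie algebra, R ≥ 1, p a continuous seminorm with asymptotic estimate q, and z ∈ ℂ. Suppose the operators Cₙ of the Gutt star product satisfy p_R(Cₙ(x,y)) ≤ (n!^{1−R}/(2·8ⁿ)) (16q)_R(x)(16q)_R(y). Then the Gutt star product x ⋆_z y = Σₙ zⁿ Cₙ(x,y) satisfies p_R(x ⋆_z y) ≤ (cq)_R(x)(cq)_R(y) with c = 16(|z|+1), for all x of degree ≤ k and y of degree ≤ ℓ (noting Cₙ(x,y) = 0 for n ≥ k+ℓ). -/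
/-!
Decompose `x` and `y` into homogeneous components. For components of degrees `i` and `j`
only the terms `n < i + j` of the star product survive, and for those
`|z|ⁿ ≤ (|z| + 1)^(i+j)`; as `n!^{1-R} ≤ 1`, the remaining coefficients `1 / (2·8ⁿ)` sum to
at most `1`. Hence `p_R(xᵢ ⋆_z yⱼ) ≤ (16(|z|+1))^(i+j) μᵢ(xᵢ) μⱼ(yⱼ)`, and bilinearity
together with subadditivity of `p_R` sums these bounds to `(cq)_R(x) (cq)_R(y)`.
-/

open Finset

variable {W : ℕ → Type*} [∀ n, AddCommGroup (W n)] [∀ n, Module ℂ (W n)]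
  [∀ n (w : W n), Decidable (w ≠ 0)]

/-- The `T_R`-seminorm `p_R = Σₙ (n!)^R pⁿ` on the graded symmetric algebra, modelled on
`Π₀ n, W n` with `ν n` representing the weighted component seminorm `(n!)^R pⁿ`. -/
noncomputable def gradedSeminorm (ν : ∀ n, Seminorm ℂ (W n)) (x : Π₀ n, W n) : ℝ :=
  ∑ n ∈ x.support, ν n (x n)

/-- The scaled `T_R`-seminorm `(c·q)_R`, with `μ n` representing `(n!)^R qⁿ` and the
scaling `cⁿ` explicit. -/
noncomputable def scaledSeminorm (μ : ∀ n, Seminorm ℂ (W n)) (c : ℝ) (x : Π₀ n, W n) : ℝ :=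
  ∑ n ∈ x.support, c ^ n * μ n (x n)

theorem map_sum_le_sum {ι E F : Type*} [AddCommGroup E] [FunLike F E ℝ]
    [AddGroupSeminormClass F E ℝ] (p : F) (s : Finset ι) (f : ι → E) :
    p (∑ i ∈ s, f i) ≤ ∑ i ∈ s, p (f i) :=
  Finset.le_sum_of_subadditive p (map_zero p).le (map_add_le_add p) s f

theorem factorial_rpow_div_le {R : ℝ} (hR : 1 ≤ R) (n : ℕ) :
    (n.factorial : ℝ) ^ ((1 : ℝ) - R) / (2 * 8 ^ n) ≤ 1 / 2 * (1 / 2) ^ n := by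
  have hfac : (n.factorial : ℝ) ^ ((1 : ℝ) - R) ≤ 1 :=
    Real.rpow_le_one_of_one_le_of_nonpos (Nat.one_le_cast.mpr n.factorial_pos) (by linarith)
  calc (n.factorial : ℝ) ^ ((1 : ℝ) - R) / (2 * 8 ^ n)
      ≤ 1 / (2 * 8 ^ n) := by gcongr
    _ = 1 / 2 * (1 / 8) ^ n := by rw [one_div_pow]; field_simp
    _ ≤ 1 / 2 * (1 / 2) ^ n := by gcongr; norm_num

theorem map_sum_pow_smul_le {𝕜 E : Type*} [NormedField 𝕜] [AddCommGroup E] [Module 𝕜 E]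
    (p : Seminorm 𝕜 E) {R : ℝ} (hR : 1 ≤ R) (z : 𝕜) (c : ℕ → E) (M : ℝ) (d N : ℕ)
    (hc : ∀ n, p (c n) ≤ (n.factorial : ℝ) ^ ((1 : ℝ) - R) / (2 * 8 ^ n) * M)
    (hvan : ∀ n, d ≤ n → c n = 0) :
    p (∑ n ∈ range N, z ^ n • c n) ≤ (‖z‖ + 1) ^ d * M := by
  have hM : 0 ≤ M := by
    have := (apply_nonneg p (c 0)).trans (hc 0)
    norm_num at this
    linarith
  have hterm : ∀ n, ‖z‖ ^ n * p (c n) ≤ (‖z‖ + 1) ^ d * M * (1 / 2 * (1 / 2) ^ n) := by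
    intro n
    rcases le_or_gt d n with hdn | hnd
    · rw [hvan n hdn, map_zero, mul_zero]
      positivity
    have hz : ‖z‖ ^ n ≤ (‖z‖ + 1) ^ d :=
      (pow_le_pow_left₀ (norm_nonneg z) (by linarith) n).trans
        (pow_le_pow_right₀ (by linarith [norm_nonneg z]) hnd.le)
    calc ‖z‖ ^ n * p (c n)
        ≤ (‖z‖ + 1) ^ d * (1 / 2 * (1 / 2) ^ n * M) := by
          gcongr
          exact (hc n).trans (by gcongr; exact factorial_rpow_div_le hR n)
      _ = _ := by ring
  calc p (∑ n ∈ range N, z ^ n • c n)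
      ≤ ∑ n ∈ range N, ‖z‖ ^ n * p (c n) := by
        refine (map_sum_le_sum p _ _).trans ?_
        simp only [map_smul_eq_mul, norm_pow, le_refl]
    _ ≤ ∑ n ∈ range N, (‖z‖ + 1) ^ d * M * (1 / 2 * (1 / 2) ^ n) := sum_le_sum fun n _ => hterm n
    _ = (‖z‖ + 1) ^ d * M * (1 / 2 * ∑ n ∈ range N, (1 / 2 : ℝ) ^ n) := by
        rw [← mul_sum, ← mul_sum]
    _ ≤ (‖z‖ + 1) ^ d * M :=
        mul_le_of_le_one_right (by positivity) (by linarith [sum_geometric_two_le N])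

theorem map_bilinear_le_of_single {R ι κ E F : Type*} [CommSemiring R] [DecidableEq ι]
    [DecidableEq κ] {β : ι → Type*} {γ : κ → Type*} [∀ i, AddCommMonoid (β i)]
    [∀ i, Module R (β i)] [∀ j, AddCommMonoid (γ j)] [∀ j, Module R (γ j)]
    [∀ i (b : β i), Decidable (b ≠ 0)] [∀ j (c : γ j), Decidable (c ≠ 0)]
    [AddCommGroup E] [Module R E] [FunLike F E ℝ] [AddGroupSeminormClass F E ℝ] (p : F)
    (B : (Π₀ i, β i) →ₗ[R] (Π₀ j, γ j) →ₗ[R] E) (f : ∀ i, β i → ℝ) (g : ∀ j, γ j → ℝ)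
    (hB : ∀ i j (b : β i) (c : γ j),
      p (B (DFinsupp.single i b) (DFinsupp.single j c)) ≤ f i b * g j c)
    (x : Π₀ i, β i) (y : Π₀ j, γ j) :
    p (B x y) ≤ (∑ i ∈ x.support, f i (x i)) * ∑ j ∈ y.support, g j (y j) := by
  have hdecomp : B x y = ∑ i ∈ x.support, ∑ j ∈ y.support,
      B (DFinsupp.single i (x i)) (DFinsupp.single j (y j)) := by
    conv_lhs => rw [← DFinsupp.sum_single (f := x), ← DFinsupp.sum_single (f := y)]
    simp only [DFinsupp.sum, map_sum, LinearMap.sum_apply]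
    exact sum_comm
  rw [hdecomp, sum_mul_sum]
  refine (map_sum_le_sum p _ _).trans (sum_le_sum fun i _ => ?_)
  exact (map_sum_le_sum p _ _).trans (sum_le_sum fun j _ => hB _ _ _ _)

theorem coe_support_single_subset_Iio {β : ℕ → Type*} [∀ n, Zero (β n)]
    [∀ n (b : β n), Decidable (b ≠ 0)] (i : ℕ) (w : β i) :
    ((DFinsupp.single i w).support : Set ℕ) ⊆ Set.Iio (i + 1) := fun m hm => by
  rw [mem_singleton.mp (DFinsupp.support_single_subset hm)]
  exact Nat.lt_succ_self i

theorem gradedSeminorm_eq_sum_of_support_subset (ν : ∀ n, Seminorm ℂ (W n))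
    {x : Π₀ n, W n} {s : Finset ℕ} (h : x.support ⊆ s) :
    gradedSeminorm ν x = ∑ n ∈ s, ν n (x n) :=
  Finset.sum_subset h fun n _ hn => by rw [DFinsupp.notMem_support_iff.mp hn, map_zero]

noncomputable def gradedSeminorm.toSeminorm (ν : ∀ n, Seminorm ℂ (W n)) :
    Seminorm ℂ (Π₀ n, W n) :=
  Seminorm.of (gradedSeminorm ν)
    (fun a b => by
      rw [gradedSeminorm_eq_sum_of_support_subset ν DFinsupp.support_add,
        gradedSeminorm_eq_sum_of_support_subset ν subset_union_left,
        gradedSeminorm_eq_sum_of_support_subset ν subset_union_right, ← sum_add_distrib]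
      exact sum_le_sum fun n _ => map_add_le_add (ν n) (a n) (b n))
    (fun c x => by
      rw [gradedSeminorm_eq_sum_of_support_subset ν (DFinsupp.support_smul c x), gradedSeminorm,
        mul_sum]
      simp only [DFinsupp.smul_apply, map_smul_eq_mul])

@[simp]
theorem gradedSeminorm.toSeminorm_apply (ν : ∀ n, Seminorm ℂ (W n)) (x : Π₀ n, W n) :
    gradedSeminorm.toSeminorm ν x = gradedSeminorm ν x :=
  rfl

theorem scaledSeminorm_single (μ : ∀ n, Seminorm ℂ (W n)) (c : ℝ) (i : ℕ) (w : W i) :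
    scaledSeminorm μ c (DFinsupp.single i w) = c ^ i * μ i w := by
  by_cases hw : w = 0
  · simp [hw, scaledSeminorm]
  · rw [scaledSeminorm, DFinsupp.support_single hw, sum_singleton,
      DFinsupp.single_eq_same]

theorem stmt11_general (ν μ : ∀ n, Seminorm ℂ (W n)) (R : ℝ) (hR : 1 ≤ R) (z : ℂ)
    (C : ℕ → (Π₀ n, W n) →ₗ[ℂ] (Π₀ n, W n) →ₗ[ℂ] (Π₀ n, W n))
    (hC : ∀ (n : ℕ) (u v : Π₀ n, W n),
      gradedSeminorm ν (C n u v) ≤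
        (n.factorial : ℝ) ^ ((1 : ℝ) - R) / (2 * 8 ^ n) *
          scaledSeminorm μ 16 u * scaledSeminorm μ 16 v)
    (hvan : ∀ (u v : Π₀ n, W n) (a b : ℕ),
      (u.support : Set ℕ) ⊆ Set.Iio (a + 1) → (v.support : Set ℕ) ⊆ Set.Iio (b + 1) →
        ∀ m : ℕ, a + b ≤ m → C m u v = 0)
    (k ℓ : ℕ) (x y : Π₀ n, W n) :
    gradedSeminorm ν (∑ n ∈ Finset.range (k + ℓ), z ^ n • C n x y) ≤
      scaledSeminorm μ (16 * (‖z‖ + 1)) x *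
        scaledSeminorm μ (16 * (‖z‖ + 1)) y := by
  let star := ∑ n ∈ range (k + ℓ), z ^ n • C n
  have star_apply (u v : Π₀ n, W n) : star u v = ∑ n ∈ range (k + ℓ), z ^ n • C n u v := by
    simp only [star, LinearMap.sum_apply, LinearMap.smul_apply]
  rw [← star_apply]
  refine map_bilinear_le_of_single (gradedSeminorm.toSeminorm ν) star
    (fun i a => (16 * (‖z‖ + 1)) ^ i * μ i a) (fun j b => (16 * (‖z‖ + 1)) ^ j * μ j b)
    (fun i j a b => ?_) x y
  rw [star_apply]
  calc gradedSeminorm ν _ ≤ (‖z‖ + 1) ^ (i + j) * (16 ^ i * μ i a * (16 ^ j * μ j b)) :=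
        map_sum_pow_smul_le (gradedSeminorm.toSeminorm ν) hR z _ _ _ _
          (fun n => by
            simpa only [gradedSeminorm.toSeminorm_apply, scaledSeminorm_single, mul_assoc] using
              hC n (DFinsupp.single i a) (DFinsupp.single j b))
          (fun n => hvan _ _ i j (coe_support_single_subset_Iio i a)
            (coe_support_single_subset_Iio j b) n)
    _ = _ := by rw [mul_pow, mul_pow, pow_add]; ring

/-- Continuity of the Gutt star product: if `R ≥ 1` and the bilinear operators `Cₙ`
satisfy `p_R(Cₙ(u,v)) ≤ (n!^{1−R}/(2·8ⁿ)) (16q)_R(u) (16q)_R(v)` and vanish for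
`n ≥ deg u + deg v`, then for `x` of degree `≤ k` and `y` of degree `≤ ℓ` the star product
`x ⋆_z y = Σ_{n<k+ℓ} zⁿ Cₙ(x,y)` satisfies `p_R(x ⋆_z y) ≤ (cq)_R(x)(cq)_R(y)` with
`c = 16(|z|+1)`. -/
theorem stmt11 (ν μ : ∀ n, Seminorm ℂ (W n)) (R : ℝ) (hR : 1 ≤ R) (z : ℂ)
    (C : ℕ → (Π₀ n, W n) →ₗ[ℂ] (Π₀ n, W n) →ₗ[ℂ] (Π₀ n, W n))
    (hC : ∀ (n : ℕ) (u v : Π₀ n, W n),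
      gradedSeminorm ν (C n u v) ≤
        (n.factorial : ℝ) ^ ((1 : ℝ) - R) / (2 * 8 ^ n) *
          scaledSeminorm μ 16 u * scaledSeminorm μ 16 v)
    (hvan : ∀ (u v : Π₀ n, W n) (a b : ℕ),
      (u.support : Set ℕ) ⊆ Set.Iio (a + 1) → (v.support : Set ℕ) ⊆ Set.Iio (b + 1) →
        ∀ m : ℕ, a + b ≤ m → C m u v = 0)
    (k ℓ : ℕ) (x y : Π₀ n, W n)
    (hx : (x.support : Set ℕ) ⊆ Set.Iio (k + 1))
    (hy : (y.support : Set ℕ) ⊆ Set.Iio (ℓ + 1)) :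
    gradedSeminorm ν (∑ n ∈ Finset.range (k + ℓ), z ^ n • C n x y) ≤
      scaledSeminorm μ (16 * (‖z‖ + 1)) x *
        scaledSeminorm μ (16 * (‖z‖ + 1)) y :=
  stmt11_general ν μ R hR z C hC hvan k ℓ x y
end

section
/- Let 𝔤 be the 3-dimensional Heisenberg Lie algebra with basis P, Q, E, [P,Q] = E, equipped with the ℓ¹-norm n making P, Q, E unit vectors. Fix 0 ≤ R < 1, ε with 2ε < 1 − R, and set a_k = P^k/(k!)^{R+ε}, b_k = Q^k/(k!)^{R+ε} in the symmetric algebra. Then n_R(a_k) = n_R(b_k) = (k!)^{−ε} → 0 while n_R(a_k ⋆ b_k) ≥ (k!)^{1−R−2ε} → ∞; hence the Gutt star product is not continuous on Sym_R(𝔤) for R < 1. -/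
/-!
The diagonal term `j = k` of the sum `s k` alone equals `(k!)^(1-R-2ε)`, which tends to infinity
since `1 - R - 2ε > 0`. A bound `s k ≤ (c^k (k!)^(-ε))²` would then give `(k!)^(1-R) ≤ (c²)^k`
for every `k`, which is impossible because `k!` outgrows every geometric sequence.
-/

open Finset Filter Nat

/-- The `j`-th summand of `n_R(a_k ⋆ b_k)`. -/
noncomputable def starTerm (R ε : ℝ) (k j : ℕ) : ℝ :=
  (k ! : ℝ) ^ 2 * (j ! : ℝ) * ((2 * k - j)! : ℝ) ^ R /
    (((k - j)! : ℝ) ^ 2 * (j ! : ℝ) ^ 2 * (k ! : ℝ) ^ (2 * R + 2 * ε))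

lemma starTerm_nonneg (R ε : ℝ) (k j : ℕ) : 0 ≤ starTerm R ε k j := by
  unfold starTerm
  positivity

lemma starTerm_self (R ε : ℝ) (k : ℕ) : starTerm R ε k k = (k ! : ℝ) ^ (1 - R - 2 * ε) := by
  have hx : 0 < (k ! : ℝ) := by positivity
  rw [starTerm, Nat.sub_self, show 2 * k - k = k by omega, Nat.factorial_zero, Nat.cast_one,
    one_pow, one_mul, show 1 - R - 2 * ε = 1 + R - (2 * R + 2 * ε) by ring,
    Real.rpow_sub hx, Real.rpow_add hx 1 R, Real.rpow_one]
  field_simp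

lemma factorial_rpow_le_sum_starTerm (R ε : ℝ) (k : ℕ) :
    (k ! : ℝ) ^ (1 - R - 2 * ε) ≤ ∑ j ∈ range (k + 1), starTerm R ε k j := by
  rw [← starTerm_self]
  exact single_le_sum (fun j _ => starTerm_nonneg R ε k j) (self_mem_range_succ k)

lemma exists_pow_lt_factorial_rpow {a : ℝ} (ha : 0 < a) (c : ℝ) :
    ∃ k : ℕ, c ^ k < (k ! : ℝ) ^ a := by
  set y : ℝ := |c| ^ a⁻¹
  obtain ⟨k, hk⟩ := ((FloorSemiring.tendsto_pow_div_factorial_atTop y).eventually_lt_const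
    one_pos).exists
  have hx : 0 < (k ! : ℝ) := by positivity
  have hyk : y ^ k < k ! := by rwa [div_lt_one hx] at hk
  refine ⟨k, ?_⟩
  calc c ^ k ≤ |c| ^ k := (le_abs_self _).trans (abs_pow c k).le
    _ = (y ^ k) ^ a := by
      rw [← Real.rpow_natCast, ← Real.rpow_natCast, ← Real.rpow_mul (by positivity),
        ← Real.rpow_mul (abs_nonneg c)]
      field_simp
    _ < (k ! : ℝ) ^ a := Real.rpow_lt_rpow (by positivity) hyk ha

theorem stmt17_general (R ε : ℝ) (hR1 : R < 1) (hε : 0 < ε)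
    (hε2 : 2 * ε < 1 - R) :
    let nRa : ℕ → ℝ := fun k => ((k.factorial : ℝ)) ^ (-ε)
    let s : ℕ → ℝ := fun k => ∑ j ∈ range (k + 1),
      (k.factorial : ℝ) ^ 2 * (j.factorial : ℝ) * (((2 * k - j).factorial : ℝ)) ^ R /
        (((k - j).factorial : ℝ) ^ 2 * (j.factorial : ℝ) ^ 2 *
          ((k.factorial : ℝ)) ^ (2 * R + 2 * ε))
    (Tendsto nRa atTop (nhds 0)) ∧
    (∀ k : ℕ, ((k.factorial : ℝ)) ^ (1 - R - 2 * ε) ≤ s k) ∧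
    (Tendsto s atTop atTop) ∧
    ¬ ∃ c : ℝ, 0 < c ∧ ∀ k : ℕ, s k ≤ (c ^ k * nRa k) * (c ^ k * nRa k) := by
  intro nRa s
  have hfact : Tendsto (fun k : ℕ => (k ! : ℝ)) atTop atTop :=
    tendsto_natCast_atTop_atTop.comp factorial_tendsto_atTop
  have hlb : ∀ k : ℕ, (k ! : ℝ) ^ (1 - R - 2 * ε) ≤ s k := factorial_rpow_le_sum_starTerm R ε
  refine ⟨(tendsto_rpow_neg_atTop hε).comp hfact, hlb,
    tendsto_atTop_mono hlb ((tendsto_rpow_atTop (by linarith)).comp hfact), ?_⟩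
  rintro ⟨c, -, hc⟩
  obtain ⟨k, hk⟩ := exists_pow_lt_factorial_rpow (sub_pos.2 hR1) (c ^ 2)
  have hx : 0 < (k ! : ℝ) := by positivity
  have hbound : (k ! : ℝ) ^ (1 - R) * ((k ! : ℝ) ^ (-ε)) ^ 2
      ≤ (c ^ 2) ^ k * ((k ! : ℝ) ^ (-ε)) ^ 2 :=
    calc (k ! : ℝ) ^ (1 - R) * ((k ! : ℝ) ^ (-ε)) ^ 2 = (k ! : ℝ) ^ (1 - R - 2 * ε) := by
          rw [← Real.rpow_natCast, ← Real.rpow_mul hx.le, ← Real.rpow_add hx]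
          ring_nf
      _ ≤ s k := hlb k
      _ ≤ (c ^ k * nRa k) * (c ^ k * nRa k) := hc k
      _ = (c ^ 2) ^ k * ((k ! : ℝ) ^ (-ε)) ^ 2 := by ring
  exact (le_of_mul_le_mul_right hbound (by positivity)).not_gt hk

/-- Failure of continuity of the Gutt star product on `Sym_R(𝔤)` for `R < 1`, for the
3-dimensional Heisenberg algebra with the `ℓ¹`-norm (`P`, `Q`, `E` unit vectors,
`[P,Q] = E`).  With `a_k = P^k/(k!)^{R+ε}`, `b_k = Q^k/(k!)^{R+ε}` one has
`n_R(a_k) = n_R(b_k) = (k!)^{−ε} → 0`, while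
`n_R(a_k ⋆ b_k) = Σ_{j≤k} (k!)² j! ((2k−j)!)^R /((k−j)!² (j!)² (k!)^{2R+2ε})`
is bounded below by `(k!)^{1−R−2ε} → ∞`; hence there is no `c > 0` with
`n_R(a_k ⋆ b_k) ≤ (cn)_R(a_k)(cn)_R(b_k) = (c^k (k!)^{−ε})²`. -/
theorem stmt17 (R ε : ℝ) (hR0 : 0 ≤ R) (hR1 : R < 1) (hε : 0 < ε)
    (hε2 : 2 * ε < 1 - R) :
    let nRa : ℕ → ℝ := fun k => ((k.factorial : ℝ)) ^ (-ε)
    let s : ℕ → ℝ := fun k => ∑ j ∈ range (k + 1),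
      (k.factorial : ℝ) ^ 2 * (j.factorial : ℝ) * (((2 * k - j).factorial : ℝ)) ^ R /
        (((k - j).factorial : ℝ) ^ 2 * (j.factorial : ℝ) ^ 2 *
          ((k.factorial : ℝ)) ^ (2 * R + 2 * ε))
    (Tendsto nRa atTop (nhds 0)) ∧
    (∀ k : ℕ, ((k.factorial : ℝ)) ^ (1 - R - 2 * ε) ≤ s k) ∧
    (Tendsto s atTop atTop) ∧
    ¬ ∃ c : ℝ, 0 < c ∧ ∀ k : ℕ, s k ≤ (c ^ k * nRa k) * (c ^ k * nRa k) :=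
  stmt17_general R ε hR1 hε hε2
end
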